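/- Let f_R(S_B) ∈ [0,1] with mean μ, suppose n·μ ≤ OPT and LB ≤ OPT, and let θ' = λ'/LB with λ' = (2+ε')·ℓ·n·ln n / ε'². If X is the sum of θ' i.i.d. copies of f_R(S_B), then P[X ≥ (1+ε')·OPT·θ'/n] ≤ n^{−ℓ}. -/

import Mathlib

/-! Chernoff's bound with `t = log (1 + ε')` holds for any upper bound `M` on the mean of the sum;
take `M = θ' · OPT / n`. Since `LB ≤ OPT`, its exponent `ε'² M / (2 + ε')` is at least
`ε'² θ' LB / (n (2 + ε')) = ℓ ln n` by the choice of `θ'`. -/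

open MeasureTheory ProbabilityTheory

lemma Real.exp_mul_le_one_add_mul_exp_sub_one {y : ℝ} (hy : y ∈ Set.Icc (0 : ℝ) 1) (t : ℝ) :
    Real.exp (t * y) ≤ 1 + y * (Real.exp t - 1) := by
  have hchord := convexOn_exp.2 (Set.mem_univ 0) (Set.mem_univ t) (sub_nonneg.2 hy.2) hy.1
    (sub_add_cancel 1 y)
  simp only [smul_eq_mul, mul_zero, zero_add, Real.exp_zero] at hchord
  rw [mul_comm t y]
  linarith

namespace ProbabilityTheory

variable {Ω ι : Type*} [MeasurableSpace Ω] {P : Measure Ω} [IsProbabilityMeasure P]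

lemma mgf_le_exp_integral_mul_of_mem_Icc {Y : Ω → ℝ} (hY : AEMeasurable Y P)
    (hb : ∀ᵐ ω ∂P, Y ω ∈ Set.Icc (0 : ℝ) 1) (t : ℝ) :
    mgf Y P t ≤ Real.exp (P[Y] * (Real.exp t - 1)) := by
  have hYint : Integrable Y P := .of_mem_Icc 0 1 hY hb
  calc mgf Y P t ≤ ∫ ω, (1 + Y ω * (Real.exp t - 1)) ∂P :=
        integral_mono_ae (integrable_exp_mul_of_mem_Icc hY hb)
          ((integrable_const 1).add (hYint.mul_const _))
          (hb.mono fun ω hω => Real.exp_mul_le_one_add_mul_exp_sub_one hω t)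
    _ = 1 + P[Y] * (Real.exp t - 1) := by
        rw [integral_add (integrable_const 1) (hYint.mul_const _), integral_const,
          integral_mul_const]
        simp
    _ ≤ Real.exp (P[Y] * (Real.exp t - 1)) := by
        linarith [Real.add_one_le_exp (P[Y] * (Real.exp t - 1))]

theorem iIndepFun.measureReal_sum_ge_le_exp_of_mem_Icc [Fintype ι] {X : ι → Ω → ℝ}
    (hindep : iIndepFun X P) (hmeas : ∀ i, Measurable (X i))
    (hbound : ∀ i, ∀ᵐ ω ∂P, X i ω ∈ Set.Icc (0 : ℝ) 1) {M δ : ℝ} (hδ : 0 ≤ δ)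
    (hM : ∑ i, P[X i] ≤ M) :
    P.real {ω | (1 + δ) * M ≤ ∑ i, X i ω} ≤ Real.exp (-(δ ^ 2 * M / (2 + δ))) := by
  set t := Real.log (1 + δ)
  have ht : 0 ≤ t := Real.log_nonneg (by linarith)
  have hexp_t : Real.exp t = 1 + δ := Real.exp_log (by linarith)
  have hmgf : mgf (∑ i, X i) P t ≤ Real.exp ((∑ i, P[X i]) * δ) := by
    rw [hindep.mgf_sum hmeas, Finset.sum_mul, Real.exp_sum]
    refine Finset.prod_le_prod (fun i _ => mgf_nonneg) fun i _ => ?_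
    simpa [hexp_t] using
      mgf_le_exp_integral_mul_of_mem_Icc (hmeas i).aemeasurable (hbound i) t
  have hM0 : 0 ≤ M := (Finset.sum_nonneg fun i _ =>
    integral_nonneg_of_ae <| (hbound i).mono fun _ h => h.1).trans hM
  have hrate : δ ^ 2 / (2 + δ) ≤ (1 + δ) * t - δ := by
    have hlog := Real.le_log_one_add_of_nonneg hδ
    rw [div_le_iff₀ (by linarith), add_comm δ 2] at hlog
    rw [div_le_iff₀ (by linarith)]
    nlinarith
  have hexponent : -t * ((1 + δ) * M) + (∑ i, P[X i]) * δ ≤ -(δ ^ 2 * M / (2 + δ)) := by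
    rw [show δ ^ 2 * M / (2 + δ) = M * (δ ^ 2 / (2 + δ)) by ring]
    linarith [mul_le_mul_of_nonneg_left hrate hM0, mul_le_mul_of_nonneg_right hM hδ]
  calc P.real {ω | (1 + δ) * M ≤ ∑ i, X i ω}
      ≤ Real.exp (-t * ((1 + δ) * M)) * mgf (∑ i, X i) P t := by
        convert measure_ge_le_exp_mul_mgf ((1 + δ) * M) ht
          (hindep.integrable_exp_mul_sum hmeas fun i _ =>
            integrable_exp_mul_of_mem_Icc (hmeas i).aemeasurable (hbound i)) using 4
        simp [Finset.sum_apply]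
    _ ≤ Real.exp (-t * ((1 + δ) * M)) * Real.exp ((∑ i, P[X i]) * δ) := by gcongr
    _ ≤ Real.exp (-(δ ^ 2 * M / (2 + δ))) := by
        rw [← Real.exp_add]
        exact Real.exp_le_exp.2 hexponent

end ProbabilityTheory

theorem stmt_12_general {Ω : Type*} [MeasurableSpace Ω] (P : Measure Ω)
    [IsProbabilityMeasure P] (n : ℕ) (θ' : ℕ) (ε' ℓ OPT LB μ : ℝ)
    (X : Fin θ' → Ω → ℝ)
    (hn : 2 ≤ n) (hε' : 0 < ε')
    (hLB : 0 < LB) (hLBOPT : LB ≤ OPT)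
    (hμOPT : (n : ℝ) * μ ≤ OPT)
    (hmeas : ∀ i, Measurable (X i))
    (hindep : iIndepFun X P)
    (hbound : ∀ i, ∀ᵐ ω ∂P, X i ω ∈ Set.Icc (0 : ℝ) 1)
    (hmean : ∀ i, P[X i] = μ)
    (hθ' : (θ' : ℝ) = (2 + ε') * ℓ * n * Real.log n / ε' ^ 2 / LB) :
    P {ω | (1 + ε') * OPT * θ' / n ≤ ∑ i, X i ω} ≤
      ENNReal.ofReal ((n : ℝ) ^ (-ℓ)) := by
  have hn0 : (0 : ℝ) < n := by positivity
  have hM : ∑ i, P[X i] ≤ θ' * OPT / n := by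
    simp only [hmean, Finset.sum_const, Finset.card_univ, Fintype.card_fin, nsmul_eq_mul]
    rw [le_div_iff₀ hn0]
    nlinarith [Nat.cast_nonneg (α := ℝ) θ']
  have hrate : ℓ * Real.log n ≤ ε' ^ 2 * (θ' * OPT / n) / (2 + ε') :=
    calc ℓ * Real.log n = ε' ^ 2 * (θ' * LB / n) / (2 + ε') := by
          rw [hθ']; field_simp
      _ ≤ ε' ^ 2 * (θ' * OPT / n) / (2 + ε') := by gcongr
  rw [← ENNReal.ofReal_toReal (measure_ne_top P _)]
  refine ENNReal.ofReal_le_ofReal ?_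
  calc (P {ω | (1 + ε') * OPT * θ' / n ≤ ∑ i, X i ω}).toReal
      = P.real {ω | (1 + ε') * (θ' * OPT / n) ≤ ∑ i, X i ω} := by ring_nf; rfl
    _ ≤ Real.exp (-(ε' ^ 2 * (θ' * OPT / n) / (2 + ε'))) :=
        hindep.measureReal_sum_ge_le_exp_of_mem_Icc hmeas hbound hε'.le hM
    _ ≤ (n : ℝ) ^ (-ℓ) := by
        rw [Real.rpow_def_of_pos hn0, Real.exp_le_exp]
        linarith

/-- Key estimate of the RefineLB correctness lemma: with `μ = E[f_R(S_B')]`,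
`n·μ ≤ OPT`, `LB ≤ OPT` and `θ' = λ'/LB` where `λ' = (2+ε')ℓ n ln n / ε'²`,
the sum `X` of `θ'` i.i.d. copies of `f_R(S_B')` satisfies
`P[X ≥ (1+ε')·OPT·θ'/n] ≤ n^{−ℓ}`. -/
theorem stmt_12 {Ω : Type*} [MeasurableSpace Ω] (P : Measure Ω)
    [IsProbabilityMeasure P] (n : ℕ) (θ' : ℕ) (ε' ℓ OPT LB μ : ℝ)
    (X : Fin θ' → Ω → ℝ)
    (hn : 2 ≤ n) (hε' : 0 < ε') (hℓ : (1 : ℝ) / 2 ≤ ℓ)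
    (hOPT : 0 < OPT) (hLB : 0 < LB) (hLBOPT : LB ≤ OPT)
    (hμ : μ ∈ Set.Icc (0 : ℝ) 1) (hμOPT : (n : ℝ) * μ ≤ OPT)
    (hmeas : ∀ i, Measurable (X i))
    (hindep : iIndepFun X P)
    (hident : ∀ i j, IdentDistrib (X i) (X j) P P)
    (hbound : ∀ i, ∀ᵐ ω ∂P, X i ω ∈ Set.Icc (0 : ℝ) 1)
    (hmean : ∀ i, P[X i] = μ)
    (hθ' : (θ' : ℝ) = (2 + ε') * ℓ * n * Real.log n / ε' ^ 2 / LB) :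
    P {ω | (1 + ε') * OPT * θ' / n ≤ ∑ i, X i ω} ≤
      ENNReal.ofReal ((n : ℝ) ^ (-ℓ)) :=
  stmt_12_general P n θ' ε' ℓ OPT LB μ X hn hε' hLB hLBOPT hμOPT hmeas hindep hbound hmean hθ'
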